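/- Suppose n ≡ 2 (mod 4). For distinct i,j in {0,...,n}, let γ_{ij} be the complete graph on the vertex set {0,...,n} \ {i,j}. Then each γ_{0j} lies in K (it has all degrees even and an even number of edges), and the map Φ sending x_j to (γ_{0j}, (0 j)) extends the defining relations: Φ(x_i)² = 1, (Φ(x_i)Φ(x_j))³ = 1, and (Φ(x_i)Φ(x_j)Φ(x_i)Φ(x_k))² equals the 4-cycle graph on 0,i,k,j (with identity permutation), for all distinct i,j,k in {1,...,n}. -/

import Mathlib

open Equiv Finset

abbrev Vtx (n : ℕ) := Fin (n+1)
abbrev Edge (n : ℕ) := {e : Sym2 (Vtx n) // ¬ e.IsDiag}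
abbrev Graphs (n : ℕ) := Edge n → ZMod 2

/-- relabelling of edges by a permutation of vertices -/
def permEdge {n : ℕ} (σ : Perm (Vtx n)) : Edge n ≃ Edge n where
  toFun e := ⟨Sym2.map σ e.1, by
    simpa [Sym2.isDiag_map σ.injective] using e.2⟩
  invFun e := ⟨Sym2.map σ.symm e.1, by
    simpa [Sym2.isDiag_map σ.symm.injective] using e.2⟩
  left_inv e := by
    ext1
    simp [Sym2.map_map]
  right_inv e := by
    ext1
    simp [Sym2.map_map]

/-- action of a vertex permutation on graphs -/
def gact {n : ℕ} (σ : Perm (Vtx n)) : Graphs n ≃+ Graphs n where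
  toFun g := fun e => g ((permEdge σ).symm e)
  invFun g := fun e => g (permEdge σ e)
  left_inv g := by funext e; simp
  right_inv g := by funext e; simp
  map_add' g h := rfl

lemma gact_mul {n : ℕ} (σ τ : Perm (Vtx n)) (g : Graphs n) :
    gact (σ * τ) g = gact σ (gact τ g) := by
  funext e
  simp only [gact, AddEquiv.coe_mk, Equiv.coe_fn_mk, Equiv.symm]
  congr 1
  ext1
  simp [permEdge, Sym2.map_map]
  rfl

/-- the action as a homomorphism to automorphisms, multiplicatively -/
def φn (n : ℕ) : Perm (Vtx n) →* MulAut (Multiplicative (Graphs n)) where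
  toFun σ := AddEquiv.toMultiplicative (gact σ)
  map_one' := by
    ext g
    simp [gact, permEdge]
    exact congrArg _ (Subtype.ext (by change Sym2.map id _ = _; simp))
  map_mul' σ τ := by
    ext g
    exact congrFun (gact_mul σ τ g.toAdd) _

/-- the ambient group `Graphs(n+1) ⋊ S_{n+1}` -/
abbrev DG (n : ℕ) := SemidirectProduct (Multiplicative (Graphs n)) (Perm (Vtx n)) (φn n)

/-- the single-edge graph with edge `{u,v}` -/
def single {n : ℕ} (u v : Vtx n) : Graphs n :=
  fun e => if e.1 = s(u, v) then 1 else 0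

/-- the generator `x_m = (e_{0m}, (0 m))` -/
def xgen {n : ℕ} (m : Vtx n) : DG n :=
  ⟨Multiplicative.ofAdd (single 0 m), Equiv.swap 0 m⟩

/-- the degree of a vertex in a graph -/
def deg {n : ℕ} (g : Graphs n) (v : Vtx n) : ℕ :=
  (Finset.univ.filter (fun e : Edge n => v ∈ e.1 ∧ g e = 1)).card

/-- the number of edges of a graph -/
def nedges {n : ℕ} (g : Graphs n) : ℕ :=
  (Finset.univ.filter (fun e : Edge n => g e = 1)).card

/-- all degrees even and an even number of edges -/
def evenGraph {n : ℕ} (g : Graphs n) : Prop :=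
  (∀ v : Vtx n, Even (deg g v)) ∧ Even (nedges g)

/-- the subgroup generated by the `x_m`, `m = 1, …, n` -/
def Dn (n : ℕ) : Subgroup (DG n) :=
  Subgroup.closure {x | ∃ m : Vtx n, m ≠ 0 ∧ x = xgen m}

/-- the complete graph -/
def complete (n : ℕ) : Graphs n := fun _ => 1
/-- the complete graph on the vertex set `{0,…,n} \ {0, j}` -/
def gammaG {n : ℕ} (j : Vtx n) : Graphs n :=
  fun e => if (0 : Vtx n) ∈ e.1 ∨ j ∈ e.1 then 0 else 1

/-- `Φ(x_j) = (γ_{0j}, (0 j))` -/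
def Phi {n : ℕ} (j : Vtx n) : DG n :=
  ⟨Multiplicative.ofAdd (gammaG j), Equiv.swap 0 j⟩

/-! A vertex permutation `σ` maps `γ_{ab}` to `γ_{σa,σb}`, and `γ_{ab} = γ_{ba}`. For any
labelling `E` of vertex pairs by graphs with these two properties, the elements
`(E_{0j}, (0 j))` satisfy the relations: the graph parts of the words cancel in pairs over
`𝔽₂`, except in the last relation, where `E_{0i} + E_{ik} + E_{kj} + E_{j0}` survives. Over
`𝔽₂`, `γ_{ab} = C + I_a + I_b + e_{ab}`, with `C` the complete graph and `I_a` the edges at `a`,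
so around a 4-cycle only the edges `e` are left.

`γ_{0j}` is the complete graph on `n - 1` vertices: its degrees `n - 2` are even, and so is
its number `(n - 1)(n - 2)/2` of edges, since `n ≡ 2 (mod 4)`. -/

variable {n : ℕ}

section Counting

lemma card_filter_mem_edge (e : Edge n) : #{v : Vtx n | v ∈ e.1} = 2 := by
  rw [← Sym2.card_toFinset_of_not_isDiag e.1 e.2]
  congr 1
  ext v
  simp [Sym2.mem_toFinset]

lemma sum_deg_eq_two_mul_nedges (g : Graphs n) : ∑ v, deg g v = 2 * nedges g := by
  have h := sum_card_bipartiteAbove_eq_sum_card_bipartiteBelow (s := univ)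
    (t := {e : Edge n | g e = 1}) (r := fun v e => v ∈ e.1)
  simp only [bipartiteAbove, bipartiteBelow, filter_filter, card_filter_mem_edge] at h
  rw [nedges, mul_comm, ← smul_eq_mul, ← sum_const]
  convert h using 2 with v
  rw [deg]
  congr 1
  ext e
  simp [and_comm]

def completeOn (S : Finset (Vtx n)) : Graphs n :=
  fun e => if ∀ v ∈ e.1, v ∈ S then 1 else 0

lemma completeOn_eq_one_iff {S : Finset (Vtx n)} {e : Edge n} :
    completeOn S e = 1 ↔ ∀ v ∈ e.1, v ∈ S := by
  unfold completeOn
  split_ifs with h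
  · exact iff_of_true rfl h
  · exact iff_of_false (by decide) h

lemma deg_completeOn_of_mem {S : Finset (Vtx n)} {v : Vtx n} (hv : v ∈ S) :
    deg (completeOn S) v = #S - 1 := by
  rw [← card_erase_of_mem hv, deg]
  symm
  refine card_bij (fun u hu => ⟨s(v, u), by simpa using (ne_of_mem_erase hu).symm⟩) ?_ ?_ ?_
  · intro u hu
    simp only [mem_filter, mem_univ, true_and, completeOn_eq_one_iff]
    refine ⟨Sym2.mem_mk_left v u, fun w hw => ?_⟩
    rcases Sym2.mem_iff.mp hw with rfl | rfl
    · exact hv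
    · exact mem_of_mem_erase hu
  · intro u₁ _ u₂ _ h
    exact Sym2.congr_right.mp (congrArg Subtype.val h)
  · rintro ⟨e, he⟩ hmem
    simp only [mem_filter, mem_univ, true_and, completeOn_eq_one_iff] at hmem
    obtain ⟨u, rfl⟩ := Sym2.mem_iff_exists.mp hmem.1
    refine ⟨u, mem_erase.mpr ⟨?_, hmem.2 u (Sym2.mem_mk_right v u)⟩, rfl⟩
    simpa [eq_comm] using he

lemma deg_completeOn_of_notMem {S : Finset (Vtx n)} {v : Vtx n} (hv : v ∉ S) :
    deg (completeOn S) v = 0 := by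
  rw [deg, card_eq_zero, filter_eq_empty_iff]
  exact fun e _ ⟨hve, he⟩ => hv (completeOn_eq_one_iff.mp he v hve)

lemma two_mul_nedges_completeOn (S : Finset (Vtx n)) :
    2 * nedges (completeOn S) = #S * (#S - 1) := by
  rw [← sum_deg_eq_two_mul_nedges, ← sum_add_sum_compl S,
    sum_congr rfl fun v hv => deg_completeOn_of_mem hv,
    sum_congr rfl fun v hv => deg_completeOn_of_notMem (mem_compl.mp hv)]
  simp

lemma evenGraph_completeOn {S : Finset (Vtx n)} (hS : #S % 4 = 1) :
    evenGraph (completeOn S) := by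
  refine ⟨fun v => ?_, ?_⟩
  · by_cases hv : v ∈ S
    · rw [deg_completeOn_of_mem hv, Nat.even_iff]
      omega
    · rw [deg_completeOn_of_notMem hv]
      exact Even.zero
  · obtain ⟨q, hq⟩ : ∃ q, #S = 4 * q + 1 := ⟨#S / 4, by omega⟩
    have h := two_mul_nedges_completeOn S
    rw [hq, Nat.add_sub_cancel] at h
    exact ⟨q * (4 * q + 1), by nlinarith⟩

end Counting

section EdgeLabelling

lemma graphs_add_self (g : Graphs n) : g + g = 0 :=
  funext fun e => CharTwo.add_self_eq_zero (g e)

lemma mk_mul_mk (g h : Graphs n) (σ τ : Perm (Vtx n)) :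
    (⟨Multiplicative.ofAdd g, σ⟩ * ⟨Multiplicative.ofAdd h, τ⟩ : DG n) =
      ⟨Multiplicative.ofAdd (g + gact σ h), σ * τ⟩ := rfl

variable (E : Vtx n → Vtx n → Graphs n)

def IsEquivariantLabelling : Prop :=
  (∀ a b, E a b = E b a) ∧ ∀ (σ : Perm (Vtx n)) a b, gact σ (E a b) = E (σ a) (σ b)

/-- `Phi = swapLift gamma` and `xgen = swapLift single`. -/
def swapLift (j : Vtx n) : DG n := ⟨Multiplicative.ofAdd (E 0 j), swap 0 j⟩

variable {E}

lemma swapLift_sq (hE : IsEquivariantLabelling E) (i : Vtx n) : swapLift E i ^ 2 = 1 := by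
  rw [pow_two, swapLift, mk_mul_mk, hE.2, swap_apply_left, swap_apply_right, hE.1 i,
    graphs_add_self, swap_mul_self]
  rfl

lemma swapLift_mul_swapLift_pow_three (hE : IsEquivariantLabelling E) {i j : Vtx n}
    (hi : i ≠ 0) (hj : j ≠ 0) (hij : i ≠ j) : (swapLift E i * swapLift E j) ^ 3 = 1 := by
  rw [pow_three, swapLift, swapLift]
  simp only [mk_mul_mk, map_add, hE.2, Perm.mul_apply, swap_apply_left, swap_apply_right,
    swap_apply_of_ne_of_ne, hi, hj, hij, hij.symm, ne_eq, not_false_eq_true]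
  refine SemidirectProduct.ext ?_ ?_
  · show Multiplicative.ofAdd _ = Multiplicative.ofAdd 0
    congr 1
    rw [hE.1 j 0]
    funext e
    simp only [Pi.add_apply, Pi.zero_apply]
    grind
  · rw [← pow_three]
    exact (Perm.isThreeCycle_swap_mul_swap_same hi.symm hj.symm hij).orderOf ▸
      pow_orderOf_eq_one _

lemma swapLift_conj_mul_swapLift_sq (hE : IsEquivariantLabelling E) {i j k : Vtx n}
    (hi : i ≠ 0) (hj : j ≠ 0) (hk : k ≠ 0) (hij : i ≠ j) (hik : i ≠ k) (hjk : j ≠ k) :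
    (swapLift E i * swapLift E j * swapLift E i * swapLift E k) ^ 2 =
      ⟨Multiplicative.ofAdd (E 0 i + E i k + E k j + E j 0), 1⟩ := by
  rw [pow_two, swapLift, swapLift, swapLift]
  simp only [mk_mul_mk, map_add, hE.2, Perm.mul_apply, swap_apply_left, swap_apply_right,
    swap_apply_of_ne_of_ne, hi, hj, hk, hij, hik, hjk, hij.symm, hik.symm, hjk.symm, ne_eq,
    not_false_eq_true]
  refine SemidirectProduct.ext ?_ ?_
  · show Multiplicative.ofAdd _ = Multiplicative.ofAdd _
    congr 1
    rw [hE.1 j i, hE.1 k 0]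
    funext e
    simp only [Pi.add_apply]
    grind
  · show _ = 1
    have hconj : swap 0 i * swap 0 j * swap 0 i = swap i j := by
      rw [swap_comm 0 j, swap_mul_swap_mul_swap hj hij.symm, swap_comm]
    have hdisj : (swap i j).Disjoint (swap 0 k) :=
      Perm.disjoint_swap_swap (by simp [hi, hj, hk.symm, hij, hik, hjk])
    rw [hconj, ← pow_two, hdisj.commute.mul_pow, pow_two, pow_two, swap_mul_self,
      swap_mul_self, one_mul]

end EdgeLabelling

section Gamma

def gamma (a b : Vtx n) : Graphs n := fun e => if a ∈ e.1 ∨ b ∈ e.1 then 0 else 1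

def incident (a : Vtx n) : Graphs n := fun e => if a ∈ e.1 then 1 else 0

lemma gamma_eq_completeOn (a b : Vtx n) : gamma a b = completeOn {a, b}ᶜ := by
  funext e
  simp only [gamma, completeOn, mem_compl, mem_insert, mem_singleton]
  split_ifs <;> grind

lemma isEquivariantLabelling_gamma : IsEquivariantLabelling (gamma (n := n)) := by
  refine ⟨fun a b => funext fun e => by simp only [gamma, or_comm], fun σ a b => ?_⟩
  funext e
  simp [gamma, gact, permEdge, Sym2.mem_map, Equiv.symm_apply_eq]

lemma gamma_eq_add {a b : Vtx n} (hab : a ≠ b) :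
    gamma a b = complete n + incident a + incident b + single a b := by
  funext e
  simp only [gamma, incident, complete, single, Pi.add_apply, ← Sym2.mem_and_mem_iff hab]
  by_cases ha : a ∈ e.1 <;> by_cases hb : b ∈ e.1 <;> simp [ha, hb] <;> decide

lemma gamma_add_gamma_add_gamma_add_gamma {a b c d : Vtx n}
    (hab : a ≠ b) (hbc : b ≠ c) (hcd : c ≠ d) (hda : d ≠ a) :
    gamma a b + gamma b c + gamma c d + gamma d a =
      single a b + single b c + single c d + single d a := by
  rw [gamma_eq_add hab, gamma_eq_add hbc, gamma_eq_add hcd, gamma_eq_add hda]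
  funext e
  simp only [Pi.add_apply]
  grind

end Gamma

/-- For `n ≡ 2 (mod 4)`, each `γ_{0j}` lies in `K`, and the assignment
`x_j ↦ (γ_{0j}, (0 j))` satisfies the defining relations: squares, cubes of products,
and `(Φ(x_i)Φ(x_j)Φ(x_i)Φ(x_k))²` equals the 4-cycle graph on `0, i, k, j` paired with
the identity permutation, for all distinct `i, j, k ∈ {1,…,n}`. -/
theorem stmt15 (n : ℕ) (hn : n % 4 = 2)
    (i j k : Vtx n) (hi : i ≠ 0) (hj : j ≠ 0) (hk : k ≠ 0)
    (hij : i ≠ j) (hik : i ≠ k) (hjk : j ≠ k) :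
    evenGraph (gammaG j) ∧
    (Phi i) ^ 2 = 1 ∧
    (Phi i * Phi j) ^ 3 = 1 ∧
    (Phi i * Phi j * Phi i * Phi k) ^ 2 =
      ⟨Multiplicative.ofAdd (single 0 i + single i k + single k j + single j 0), 1⟩ := by
  have hE := isEquivariantLabelling_gamma (n := n)
  refine ⟨?_, swapLift_sq hE i, swapLift_mul_swapLift_pow_three hE hi hj hij, ?_⟩
  · have hcard : #({0, j}ᶜ : Finset (Vtx n)) = n - 1 := by
      rw [card_compl, card_pair hj.symm, Fintype.card_fin]
      omega
    show evenGraph (gamma 0 j)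
    rw [gamma_eq_completeOn]
    exact evenGraph_completeOn (by omega)
  · rw [← gamma_add_gamma_add_gamma_add_gamma hi.symm hik hjk.symm hj]
    exact swapLift_conj_mul_swapLift_sq hE hi hj hk hij hik hjk
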